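/- The Terwilliger algebra T of the scheme K_{n_1} ≀ K_{n_2} ≀ ⋯ ≀ K_{n_d} has ℂ-dimension (d+1)^2 + d(d+1)/2 − b, where b = |{k ∈ {1,…,d} : n_k = 2}| is the number of factors K_{n_k} with n_k = 2. -/

import Mathlib

/-!
The products `E_i^* A_j E_h^*` are the 0/1 matrices of the classes of the coloring
`(y, z) ↦ (i, j, h)` of `X × X`, where `y ∈ E_i^*`, `(y, z) ∈ R_j`, `z ∈ E_h^*`. The index of the
relation between two vertices is an ultrametric, and for two triangles `x₀, y, z` of the same
color, permuting each coordinate maps the vertices with prescribed relations to the first triangle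
injectively into those for the second. So the coloring is coherent: the span of its classes is
an algebra, it contains every `A_j` and `E_i^*`, and therefore it is `T`. Its dimension is the
number of colors that occur: `(i, max i h, h)` for `i ≠ h`, `(i, j, i)` for `j < i`, and
`(i, i, i)` exactly when `i = 0` or `n_i ≥ 3`, as `x₀, y, z` then take three distinct values in
coordinate `i`.
-/

open scoped Classical

noncomputable section

/-- Relation `R i` of the wreath product scheme `K_{n 1} ≀ ⋯ ≀ K_{n d}`
(coordinates 0-indexed): `R 0` is the identity relation; for `1 ≤ i ≤ d`,
`(x, y) ∈ R i` iff coordinate `i - 1` is the largest coordinate where `x`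
and `y` differ. -/
def wRel (d : ℕ) (n : Fin d → ℕ) (i : ℕ) (x y : ∀ k : Fin d, Fin (n k)) : Prop :=
  if h : 1 ≤ i ∧ i ≤ d then
    x ⟨i - 1, by omega⟩ ≠ y ⟨i - 1, by omega⟩ ∧
      ∀ k : Fin d, i - 1 < (k : ℕ) → x k = y k
  else x = y

/-- Adjacency matrix `A i`. -/
def wA (d : ℕ) (n : Fin d → ℕ) (i : ℕ) :
    Matrix (∀ k : Fin d, Fin (n k)) (∀ k : Fin d, Fin (n k)) ℂ :=
  Matrix.of fun x y => if wRel d n i x y then 1 else 0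

/-- The base vertex `(1, 1, …, 1)` (0-indexed: all coordinates `0`). -/
def wBase (d : ℕ) (n : Fin d → ℕ) (hn : ∀ k, 2 ≤ n k) : ∀ k : Fin d, Fin (n k) :=
  fun k => ⟨0, by have := hn k; omega⟩

/-- Dual idempotent `E_i^*` with respect to the base vertex. -/
def wE (d : ℕ) (n : Fin d → ℕ) (hn : ∀ k, 2 ≤ n k) (i : ℕ) :
    Matrix (∀ k : Fin d, Fin (n k)) (∀ k : Fin d, Fin (n k)) ℂ :=
  Matrix.of fun y z => if y = z ∧ wRel d n i (wBase d n hn) y then 1 else 0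

/-- `T₀`: the linear span of the triple products `E_i^* A_j E_h^*`. -/
def wT0 (d : ℕ) (n : Fin d → ℕ) (hn : ∀ k, 2 ≤ n k) :
    Submodule ℂ (Matrix (∀ k : Fin d, Fin (n k)) (∀ k : Fin d, Fin (n k)) ℂ) :=
  Submodule.span ℂ
    {M | ∃ i j h : ℕ, i ≤ d ∧ j ≤ d ∧ h ≤ d ∧
      M = wE d n hn i * wA d n j * wE d n hn h}

/-- The Terwilliger algebra: the unital subalgebra generated by the `A i`
and the `E_i^*`. -/
def wT (d : ℕ) (n : Fin d → ℕ) (hn : ∀ k, 2 ≤ n k) :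
    Subalgebra ℂ (Matrix (∀ k : Fin d, Fin (n k)) (∀ k : Fin d, Fin (n k)) ℂ) :=
  Algebra.adjoin ℂ
    ({M | ∃ i ≤ d, M = wA d n i} ∪ {M | ∃ i ≤ d, M = wE d n hn i})

open Finset Function

theorem Equiv.Perm.exists_apply_eq_of_eq_iff {ι α : Type*} [Finite α] {s : Set ι}
    {f g : ι → α} (h : ∀ a ∈ s, ∀ b ∈ s, f a = f b ↔ g a = g b) :
    ∃ σ : Equiv.Perm α, ∀ a ∈ s, σ (f a) = g a := by
  rcases isEmpty_or_nonempty ι with hι | hι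
  · exact ⟨1, fun a => isEmptyElim a⟩
  have : Fintype α := Fintype.ofFinite α
  set φ := g ∘ invFunOn f s
  have hφ : ∀ a ∈ s, φ (f a) = g a := fun a ha =>
    (h _ (invFunOn_mem ⟨a, ha, rfl⟩) a ha).1 (invFunOn_eq ⟨a, ha, rfl⟩)
  have hinj : Set.InjOn φ (f '' s) := by
    rintro _ ⟨a, ha, rfl⟩ _ ⟨b, hb, rfl⟩ hab
    rw [hφ a ha, hφ b hb] at hab
    exact (h a ha b hb).2 hab
  obtain ⟨e, he⟩ := Set.MapsTo.exists_equiv_extend_of_card_eq (t := univ)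
    card_univ.symm (fun _ _ => mem_coe.2 (mem_univ _)) hinj
  exact ⟨e.trans (Equiv.subtypeUnivEquiv mem_univ), fun a ha =>
    (he _ ⟨a, ha, rfl⟩).trans (hφ a ha)⟩

section Coloring

variable {X κ R : Type*} [Fintype X]

def colorMatrix [Zero R] [One R] [DecidableEq κ] (c : X → X → κ) (a : κ) : Matrix X X R :=
  Matrix.of fun y z => if c y z = a then 1 else 0

variable (R) in
def coloredMatrices [Semiring R] (c : X → X → κ) : Submodule R (Matrix X X R) where
  carrier := {M | ∀ y z y' z', c y z = c y' z' → M y z = M y' z'}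
  add_mem' hM hN y z y' z' h := by simp only [Matrix.add_apply, hM y z y' z' h, hN y z y' z' h]
  zero_mem' _ _ _ _ _ := rfl
  smul_mem' r M hM y z y' z' h := by simp only [Matrix.smul_apply, hM y z y' z' h]

theorem mem_coloredMatrices_iff [Semiring R] {c : X → X → κ} {M : Matrix X X R} :
    M ∈ coloredMatrices R c ↔ ∃ m : κ → R, ∀ y z, M y z = m (c y z) := by
  refine ⟨fun hM => ?_, fun ⟨m, hm⟩ y z y' z' h => by rw [hm, hm, h]⟩
  refine ⟨fun a => if h : ∃ p : X × X, c p.1 p.2 = a then M h.choose.1 h.choose.2 else 0,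
    fun y z => ?_⟩
  have h : ∃ p : X × X, c p.1 p.2 = c y z := ⟨(y, z), rfl⟩
  dsimp only
  rw [dif_pos h]
  exact hM _ _ _ _ h.choose_spec.symm

variable [DecidableEq κ]

theorem colorMatrix_mem_coloredMatrices [Semiring R] (c : X → X → κ) (a : κ) :
    colorMatrix c a ∈ coloredMatrices R c :=
  mem_coloredMatrices_iff.2 ⟨fun b => if b = a then 1 else 0, fun _ _ => rfl⟩

theorem span_colorMatrix [Semiring R] (c : X → X → κ) :
    Submodule.span R (Set.range fun a : image₂ c univ univ => colorMatrix c (a : κ)) =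
      coloredMatrices R c := by
  refine le_antisymm (Submodule.span_le.2 ?_) fun M hM => ?_
  · rintro _ ⟨a, rfl⟩
    exact colorMatrix_mem_coloredMatrices c a
  obtain ⟨m, hm⟩ := mem_coloredMatrices_iff.1 hM
  have hsum : M = ∑ a : image₂ c univ univ, m a • colorMatrix c (a : κ) := by
    ext y z
    rw [hm, Matrix.sum_apply,
      sum_eq_single ⟨c y z, mem_image₂_of_mem (mem_univ y) (mem_univ z)⟩]
    · simp [colorMatrix]
    · intro a _ ha
      simp [colorMatrix, Ne.symm (Subtype.coe_ne_coe.2 ha)]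
    · simp
  rw [hsum]
  exact Submodule.sum_mem _ fun a _ => Submodule.smul_mem _ _ (Submodule.subset_span ⟨a, rfl⟩)

theorem linearIndependent_colorMatrix [Ring R] [Nontrivial R] (c : X → X → κ) :
    LinearIndependent R fun a : image₂ c univ univ => (colorMatrix c (a : κ) : Matrix X X R) := by
  refine Fintype.linearIndependent_iff.2 fun g hg a => ?_
  obtain ⟨y, -, z, -, hyz⟩ := mem_image₂.1 a.2
  have := congrFun (congrFun hg y) z
  rw [Matrix.sum_apply, sum_eq_single a] at this
  · simpa [colorMatrix, hyz] using this
  · intro b _ hb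
    simp [colorMatrix, hyz, Subtype.coe_ne_coe.2 (Ne.symm hb)]
  · exact fun h => absurd (mem_univ a) h

theorem finrank_coloredMatrices [Ring R] [Nontrivial R] [StrongRankCondition R] (c : X → X → κ) :
    Module.finrank R (coloredMatrices R c) = #(image₂ c univ univ) := by
  rw [← span_colorMatrix, finrank_span_eq_card (linearIndependent_colorMatrix c),
    Fintype.card_coe]

/-- The color classes of `c` form a coherent configuration. -/
structure IsCoherent (c : X → X → κ) : Prop where
  eq_iff_of_color_eq : ∀ {y z y' z'}, c y z = c y' z' → (y = z ↔ y' = z')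
  card_eq_of_color_eq : ∀ {y z y' z'}, c y z = c y' z' → ∀ a b,
    #{w | c y w = a ∧ c w z = b} = #{w | c y' w = a ∧ c w z' = b}

namespace IsCoherent

variable [CommSemiring R] {c : X → X → κ}

theorem one_mem [DecidableEq X] (hc : IsCoherent c) :
    (1 : Matrix X X R) ∈ coloredMatrices R c := by
  intro y z y' z' h
  simp only [Matrix.one_apply, hc.eq_iff_of_color_eq h]

theorem mul_mem (hc : IsCoherent c) {M N : Matrix X X R} (hM : M ∈ coloredMatrices R c)
    (hN : N ∈ coloredMatrices R c) : M * N ∈ coloredMatrices R c := by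
  obtain ⟨m, hm⟩ := mem_coloredMatrices_iff.1 hM
  obtain ⟨m', hm'⟩ := mem_coloredMatrices_iff.1 hN
  have hexpand : ∀ y z, (M * N) y z = ∑ ab ∈ image₂ c univ univ ×ˢ image₂ c univ univ,
      #{w | c y w = ab.1 ∧ c w z = ab.2} • (m ab.1 * m' ab.2) := by
    intro y z
    rw [Matrix.mul_apply, ← sum_fiberwise_of_maps_to (g := fun w => (c y w, c w z))
      fun w _ => mem_product.2 ⟨mem_image₂_of_mem (mem_univ _) (mem_univ _),
        mem_image₂_of_mem (mem_univ _) (mem_univ _)⟩]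
    refine sum_congr rfl fun ab _ => ?_
    simp only [Prod.ext_iff]
    rw [← sum_const]
    refine sum_congr rfl fun w hw => ?_
    obtain ⟨-, hyw, hwz⟩ := mem_filter.1 hw
    rw [hm, hm', hyw, hwz]
  intro y z y' z' h
  simp only [hexpand, hc.card_eq_of_color_eq h]

variable (R) in
def subalgebra [DecidableEq X] (hc : IsCoherent c) : Subalgebra R (Matrix X X R) :=
  (coloredMatrices R c).toSubalgebra hc.one_mem fun _ _ => hc.mul_mem

end IsCoherent

end Coloring

section DiffLevel

variable {d : ℕ} {α : Fin d → Type*}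

/-- The index `i` of the relation `R_i` of the wreath product scheme that contains `(x, y)`. -/
def diffLevel (x y : ∀ k, α k) : ℕ :=
  univ.sup fun k => if x k = y k then 0 else (k : ℕ) + 1

variable {x y z x' y' : ∀ k, α k}

theorem diffLevel_le_iff {c : ℕ} : diffLevel x y ≤ c ↔ ∀ k : Fin d, c ≤ k → x k = y k := by
  simp only [diffLevel, Finset.sup_le_iff, mem_univ, true_implies]
  refine forall_congr' fun k => ?_
  by_cases h : x k = y k <;> simp [h]

theorem lt_diffLevel_of_ne {k : Fin d} (h : x k ≠ y k) : (k : ℕ) < diffLevel x y := by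
  by_contra hle
  exact h (diffLevel_le_iff.1 (not_lt.1 hle) k le_rfl)

theorem diffLevel_le (x y : ∀ k, α k) : diffLevel x y ≤ d :=
  diffLevel_le_iff.2 fun k hk => absurd k.isLt (not_lt.2 hk)

theorem diffLevel_eq_zero_iff : diffLevel x y = 0 ↔ x = y := by
  rw [← Nat.le_zero, diffLevel_le_iff, funext_iff]
  simp

@[simp]
theorem diffLevel_self (x : ∀ k, α k) : diffLevel x x = 0 :=
  diffLevel_eq_zero_iff.2 rfl

theorem diffLevel_comm (x y : ∀ k, α k) : diffLevel x y = diffLevel y x := by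
  simp only [diffLevel, eq_comm]

theorem diffLevel_le_max (x y z : ∀ k, α k) :
    diffLevel x z ≤ max (diffLevel x y) (diffLevel y z) :=
  diffLevel_le_iff.2 fun k hk =>
    (diffLevel_le_iff.1 le_sup_left k hk).trans (diffLevel_le_iff.1 le_sup_right k hk)

theorem diffLevel_eq_max_of_ne (h : diffLevel x y ≠ diffLevel x z) :
    diffLevel y z = max (diffLevel x y) (diffLevel x z) := by
  have h₁ := diffLevel_le_max y x z
  have h₂ := diffLevel_le_max x y z
  have h₃ := diffLevel_le_max x z y
  rw [diffLevel_comm y x] at h₁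
  rw [diffLevel_comm z y] at h₃
  omega

theorem diffLevel_le_iff_eq_of_le_succ {k : Fin d} (h : diffLevel x y ≤ k + 1) :
    diffLevel x y ≤ k ↔ x k = y k := by
  refine ⟨fun hk => diffLevel_le_iff.1 hk k le_rfl,
    fun hk => diffLevel_le_iff.2 fun k' hk' => ?_⟩
  rcases hk'.eq_or_lt with h' | h'
  · rwa [← Fin.ext h']
  · exact diffLevel_le_iff.1 h k' h'

theorem diffLevel_eq_succ_iff {k : Fin d} :
    diffLevel x y = k + 1 ↔ x k ≠ y k ∧ ∀ k' : Fin d, k < k' → x k' = y k' := by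
  refine ⟨fun h => ⟨fun hk => ?_, fun k' hk' => diffLevel_le_iff.1 h.le k' hk'⟩,
    fun ⟨hk, h⟩ => le_antisymm (diffLevel_le_iff.2 h) (lt_diffLevel_of_ne hk)⟩
  have := (diffLevel_le_iff_eq_of_le_succ h.le).2 hk
  omega

theorem diffLevel_update_self (x : ∀ k, α k) (k : Fin d) {a : α k} (ha : a ≠ x k) :
    diffLevel x (update x k a) = k + 1 :=
  diffLevel_eq_succ_iff.2
    ⟨by simpa using ha.symm, fun k' hk' => by simp [(Fin.ne_of_lt hk').symm]⟩

theorem exists_diffLevel_eq [∀ k, Nontrivial (α k)] (x : ∀ k, α k) {i : ℕ} (hi : i ≤ d) :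
    ∃ y, diffLevel x y = i := by
  rcases i with _ | k
  · exact ⟨x, diffLevel_self x⟩
  obtain ⟨a, ha⟩ := exists_ne (x ⟨k, hi⟩)
  exact ⟨update x ⟨k, hi⟩ a, diffLevel_update_self x ⟨k, hi⟩ ha⟩

theorem diffLevel_map (σ : ∀ k, Equiv.Perm (α k)) (x y : ∀ k, α k) :
    diffLevel (fun k => σ k (x k)) (fun k => σ k (y k)) = diffLevel x y := by
  simp only [diffLevel, (σ _).injective.eq_iff]

theorem diffLevel_eq_of_eq_of_le_succ {c : ℕ} (h : diffLevel x y = c)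
    (hx : ∀ k : Fin d, c ≤ k + 1 → x k = x' k) (hy : ∀ k : Fin d, c ≤ k + 1 → y k = y' k) :
    diffLevel x' y' = c := by
  rcases c with _ | k
  · exact diffLevel_eq_zero_iff.2 <| funext fun k =>
      (hx k (Nat.zero_le _)).symm.trans (diffLevel_eq_zero_iff.1 h ▸ hy k (Nat.zero_le _))
  have hk : k < d := by have := diffLevel_le x y; omega
  obtain ⟨hne, hup⟩ := diffLevel_eq_succ_iff (k := ⟨k, hk⟩).1 h
  refine diffLevel_eq_succ_iff (k := ⟨k, hk⟩).2 ⟨?_, fun k' hk' => ?_⟩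
  · rwa [← hx _ le_rfl, ← hy _ le_rfl]
  · have hk'' : k + 1 ≤ (k' : ℕ) + 1 := Nat.succ_le_succ (Fin.lt_def.1 hk').le
    rw [← hx k' hk'', ← hy k' hk'', hup k' hk']

/- A point `w₀` of the left-hand set bounds every `diffLevel (P a) (P b)` by
`max (t a) (t b)`, so on each coordinate `k` the entries of the `P a` with `t a ≤ k + 1` have the
same equality pattern as those of the `P' a`. A permutation of each coordinate realising this
matching maps the left-hand set injectively into the right-hand one. -/
theorem card_filter_diffLevel_le [∀ k, Fintype (α k)] {ι : Type*} {P P' : ι → ∀ k, α k}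
    (hP : ∀ a b, diffLevel (P a) (P b) = diffLevel (P' a) (P' b)) (t : ι → ℕ) :
    #{w | ∀ a, diffLevel (P a) w = t a} ≤ #{w | ∀ a, diffLevel (P' a) w = t a} := by
  obtain hempty | ⟨w₀, hw₀⟩ :=
    (filter (fun w => ∀ a, diffLevel (P a) w = t a) univ).eq_empty_or_nonempty
  · simp [hempty]
  simp only [mem_filter, mem_univ, true_and] at hw₀
  have hσ (k : Fin d) : ∃ σ : Equiv.Perm (α k), ∀ a ∈ {a | t a ≤ k + 1}, σ (P a k) = P' a k :=
    Equiv.Perm.exists_apply_eq_of_eq_iff fun a ha b hb => by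
      have hab : diffLevel (P a) (P b) ≤ k + 1 := (diffLevel_le_max _ w₀ _).trans <| by
        rw [hw₀ a, diffLevel_comm, hw₀ b]
        exact max_le ha hb
      rw [← diffLevel_le_iff_eq_of_le_succ hab,
        ← diffLevel_le_iff_eq_of_le_succ (hP a b ▸ hab), hP]
  choose σ hσ using hσ
  refine card_le_card_of_injOn (fun w k => σ k (w k)) (fun w hw => ?_)
    fun w _ w' _ h => funext fun k => (σ k).injective (congrFun h k)
  simp only [coe_filter, mem_univ, true_and, Set.mem_ofPred_eq] at hw ⊢
  exact fun a => diffLevel_eq_of_eq_of_le_succ ((diffLevel_map σ _ _).trans (hw a))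
    (fun k hk => hσ k a hk) fun _ _ => rfl

theorem card_filter_diffLevel_eq [∀ k, Fintype (α k)] {ι : Type*} {P P' : ι → ∀ k, α k}
    (hP : ∀ a b, diffLevel (P a) (P b) = diffLevel (P' a) (P' b)) (t : ι → ℕ) :
    #{w | ∀ a, diffLevel (P a) w = t a} = #{w | ∀ a, diffLevel (P' a) w = t a} :=
  le_antisymm (card_filter_diffLevel_le hP t)
    (card_filter_diffLevel_le (fun a b => (hP a b).symm) t)

end DiffLevel

section Profile

variable {d : ℕ} {α : Fin d → Type*}

/-- `diffProfile b y z = (i, j, h)` iff `y ∈ E_i^*`, `(y, z) ∈ R_j` and `z ∈ E_h^*` for the base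
vertex `b`. -/
def diffProfile (b y z : ∀ k, α k) : ℕ × ℕ × ℕ := (diffLevel b y, diffLevel y z, diffLevel b z)

theorem isCoherent_diffProfile [∀ k, Fintype (α k)] (b : ∀ k, α k) :
    IsCoherent (diffProfile b) where
  eq_iff_of_color_eq {y z y' z'} h := by
    have hyz : diffLevel y z = diffLevel y' z' := congrArg (·.2.1) h
    rw [← diffLevel_eq_zero_iff, ← diffLevel_eq_zero_iff, hyz]
  card_eq_of_color_eq {y z y' z'} h a a' := by
    obtain ⟨hy, hyz, hz⟩ : diffLevel b y = diffLevel b y' ∧ diffLevel y z = diffLevel y' z' ∧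
        diffLevel b z = diffLevel b z' := by simpa [diffProfile] using h
    have hfilter (y z : ∀ k, α k) : #{w | diffProfile b y w = a ∧ diffProfile b w z = a'} =
        if diffLevel b y = a.1 ∧ diffLevel b z = a'.2.2 ∧ a.2.2 = a'.1 then
          #{w | ∀ i, diffLevel (![b, y, z] i) w = ![a.2.2, a.2.1, a'.2.1] i} else 0 := by
      split_ifs with hc
      · congr 1
        ext w
        simp only [mem_filter, mem_univ, true_and, diffProfile, Prod.ext_iff, hc,
          diffLevel_comm w z, Fin.forall_fin_succ, Matrix.cons_val_zero, Matrix.cons_val_succ,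
          Matrix.cons_val_fin_one, forall_const]
        tauto
      · rw [card_eq_zero, filter_eq_empty_iff]
        rintro w - ⟨rfl, rfl⟩
        exact hc ⟨rfl, rfl, rfl⟩
    rw [hfilter, hfilter, hy, hz]
    congr 1
    convert card_filter_diffLevel_eq (P' := ![b, y', z']) (fun i j => ?_) _
    fin_cases i <;> fin_cases j <;>
      simp [diffLevel_comm _ b, hy, hyz, hz, diffLevel_comm z y, diffLevel_comm z' y']

theorem exists_diffProfile_eq_of_ne [∀ k, Nontrivial (α k)] (b : ∀ k, α k) {i h : ℕ}
    (hi : i ≤ d) (hh : h ≤ d) (hne : i ≠ h) : ∃ y z, diffProfile b y z = (i, max i h, h) := by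
  obtain ⟨y, hy⟩ := exists_diffLevel_eq b hi
  obtain ⟨z, hz⟩ := exists_diffLevel_eq b hh
  refine ⟨y, z, ?_⟩
  rw [diffProfile, diffLevel_eq_max_of_ne (x := b) (y := y) (z := z) (by rwa [hy, hz]), hy, hz]

theorem exists_diffProfile_eq_of_lt [∀ k, Nontrivial (α k)] (b : ∀ k, α k) {i j : ℕ}
    (hj : j < i) (hi : i ≤ d) : ∃ y z, diffProfile b y z = (i, j, i) := by
  obtain ⟨y, hy⟩ := exists_diffLevel_eq b hi
  obtain ⟨z, hz⟩ := exists_diffLevel_eq y (hj.le.trans hi)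
  refine ⟨y, z, ?_⟩
  have hbz : diffLevel b z = i := by
    by_contra hne
    have := diffLevel_eq_max_of_ne (x := b) (y := y) (z := z) (by omega)
    omega
  rw [diffProfile, hy, hz, hbz]

variable [∀ k, Fintype (α k)]

theorem exists_diffProfile_eq_of_three_le_card (b : ∀ k, α k) {k : Fin d}
    (hk : 3 ≤ Fintype.card (α k)) :
    ∃ y z, diffProfile b y z = ((k : ℕ) + 1, (k : ℕ) + 1, (k : ℕ) + 1) := by
  have : Nontrivial (α k) := Fintype.one_lt_card_iff_nontrivial.1 (by omega)
  obtain ⟨u, hu⟩ := exists_ne (b k)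
  obtain ⟨v, -, hv⟩ := exists_mem_notMem_of_card_lt_card (s := {b k, u}) (t := univ)
    (card_le_two.trans_lt (by rwa [card_univ]))
  simp only [mem_insert, mem_singleton, not_or] at hv
  refine ⟨update b k u, update b k v, ?_⟩
  have hyz := diffLevel_update_self (update b k u) k (a := v) (by simpa using hv.2)
  rw [update_idem] at hyz
  rw [diffProfile, diffLevel_update_self b k hu, diffLevel_update_self b k hv.1, hyz]

theorem three_le_card_of_diffLevel_eq {b y z : ∀ k, α k} {k : Fin d}
    (hy : diffLevel b y = k + 1) (hyz : diffLevel y z = k + 1) (hz : diffLevel b z = k + 1) :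
    3 ≤ Fintype.card (α k) :=
  Fintype.two_lt_card_iff.2 ⟨b k, y k, z k, (diffLevel_eq_succ_iff.1 hy).1,
    (diffLevel_eq_succ_iff.1 hz).1, (diffLevel_eq_succ_iff.1 hyz).1⟩

def offDiagProfiles (d : ℕ) : Finset (ℕ × ℕ × ℕ) :=
  (range (d + 1)).offDiag.image fun p => (p.1, max p.1 p.2, p.2)

def subdiagProfiles (d : ℕ) : Finset (ℕ × ℕ × ℕ) :=
  (range (d + 1)).biUnion fun i => (range i).image fun j => (i, j, i)

variable (α) in
def diagProfiles : Finset (ℕ × ℕ × ℕ) :=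
  insert (0, 0, 0) <| (univ.filter fun k => 3 ≤ Fintype.card (α k)).image
    fun k : Fin d => ((k : ℕ) + 1, (k : ℕ) + 1, (k : ℕ) + 1)

theorem diffProfile_mem_profiles (b y z : ∀ k, α k) :
    diffProfile b y z ∈ offDiagProfiles d ∪ subdiagProfiles d ∪ diagProfiles α := by
  have hy := diffLevel_le b y
  have hz := diffLevel_le b z
  rw [mem_union, mem_union]
  rcases ne_or_eq (diffLevel b y) (diffLevel b z) with hne | heq
  · refine Or.inl (Or.inl (mem_image.2 ⟨(diffLevel b y, diffLevel b z), ?_, ?_⟩))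
    · exact mem_offDiag.2
        ⟨mem_range.2 (Nat.lt_succ_of_le hy), mem_range.2 (Nat.lt_succ_of_le hz), hne⟩
    · rw [diffProfile, diffLevel_eq_max_of_ne hne]
  have hyz : diffLevel y z ≤ diffLevel b y := by
    have := diffLevel_le_max y b z
    rwa [diffLevel_comm y b, ← heq, max_self] at this
  rcases hyz.lt_or_eq with hlt | hyz
  · refine Or.inl (Or.inr (mem_biUnion.2 ⟨diffLevel b y, mem_range.2 (Nat.lt_succ_of_le hy), ?_⟩))
    exact mem_image.2 ⟨_, mem_range.2 hlt, by rw [diffProfile, heq]⟩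
  refine Or.inr (mem_insert.2 ?_)
  rcases Nat.eq_zero_or_pos (diffLevel b y) with h0 | hpos
  · exact Or.inl (by rw [diffProfile, hyz, ← heq, h0])
  obtain ⟨k, hk⟩ : ∃ k : Fin d, diffLevel b y = k + 1 :=
    ⟨⟨diffLevel b y - 1, by omega⟩, (Nat.sub_add_cancel hpos).symm⟩
  refine Or.inr (mem_image.2 ⟨k, mem_filter.2 ⟨mem_univ k, ?_⟩, ?_⟩)
  · exact three_le_card_of_diffLevel_eq hk (hyz.trans hk) (heq ▸ hk)
  · rw [diffProfile, hyz, ← heq, hk]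

theorem image₂_diffProfile [∀ k, Nontrivial (α k)] (b : ∀ k, α k) :
    image₂ (diffProfile b) univ univ =
      offDiagProfiles d ∪ subdiagProfiles d ∪ diagProfiles α := by
  ext p
  simp only [mem_image₂, mem_univ, true_and]
  refine ⟨by rintro ⟨y, z, rfl⟩; exact diffProfile_mem_profiles b y z, fun hp => ?_⟩
  simp only [mem_union, offDiagProfiles, subdiagProfiles, diagProfiles, mem_image, mem_offDiag,
    mem_biUnion, mem_range, mem_insert, mem_filter, mem_univ, true_and] at hp
  rcases hp with (⟨⟨i, h⟩, ⟨hi, hh, hne⟩, rfl⟩ | ⟨i, hi, j, hj, rfl⟩) | (rfl | ⟨k, hk, rfl⟩)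
  · exact exists_diffProfile_eq_of_ne b (Nat.le_of_lt_succ hi) (Nat.le_of_lt_succ hh) hne
  · exact exists_diffProfile_eq_of_lt b hj (Nat.le_of_lt_succ hi)
  · exact ⟨b, b, by simp [diffProfile]⟩
  · exact exists_diffProfile_eq_of_three_le_card b hk

theorem card_offDiagProfiles (d : ℕ) :
    #(offDiagProfiles d) = (d + 1) * (d + 1) - (d + 1) := by
  rw [offDiagProfiles, card_image_of_injective, offDiag_card, card_range]
  intro p q h
  simp only [Prod.mk.injEq] at h
  exact Prod.ext h.1 h.2.2

theorem card_subdiagProfiles (d : ℕ) : #(subdiagProfiles d) = (d + 1) * d / 2 := by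
  rw [subdiagProfiles, card_biUnion]
  · calc ∑ i ∈ range (d + 1), #((range i).image fun j => (i, j, i))
        _ = ∑ i ∈ range (d + 1), i := sum_congr rfl fun i _ => by
          rw [card_image_of_injective _ fun j j' h => (Prod.mk.inj (Prod.mk.inj h).2).1,
            card_range]
        _ = (d + 1) * d / 2 := by rw [sum_range_id, Nat.add_sub_cancel]
  · intro i _ i' _ hii'
    simp only [Function.onFun, disjoint_left, mem_image]
    rintro _ ⟨j, -, rfl⟩ ⟨j', -, h⟩
    exact hii' (Prod.mk.inj h).1.symm

theorem card_diagProfiles : #(diagProfiles α) = #{k | 3 ≤ Fintype.card (α k)} + 1 := by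
  rw [diagProfiles, card_insert_of_notMem, card_image_of_injective]
  · intro k k' h
    simpa [Fin.ext_iff] using (Prod.mk.inj h).1
  · simp

theorem disjoint_offDiagProfiles_subdiagProfiles (d : ℕ) :
    Disjoint (offDiagProfiles d) (subdiagProfiles d) := by
  simp only [offDiagProfiles, subdiagProfiles, disjoint_left, mem_image, mem_offDiag, mem_biUnion]
  rintro _ ⟨p, ⟨-, -, hp⟩, rfl⟩ ⟨i, -, j, -, h⟩
  simp only [Prod.mk.injEq] at h
  exact hp (h.1.symm.trans h.2.2)

theorem disjoint_profiles_diagProfiles :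
    Disjoint (offDiagProfiles d ∪ subdiagProfiles d) (diagProfiles α) := by
  simp only [offDiagProfiles, subdiagProfiles, diagProfiles, disjoint_left, mem_union, mem_image,
    mem_offDiag, mem_biUnion, mem_range, mem_insert]
  rintro _ (⟨p, ⟨-, -, hp⟩, rfl⟩ | ⟨i, -, j, hj, rfl⟩) (h | ⟨k, -, h⟩) <;>
    simp only [Prod.mk.injEq] at h <;> omega

theorem card_image₂_diffProfile [∀ k, Nontrivial (α k)] (b : ∀ k, α k) :
    #(image₂ (diffProfile b) univ univ) =
      (d + 1) ^ 2 + d * (d + 1) / 2 - #{k | Fintype.card (α k) = 2} := by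
  rw [image₂_diffProfile, card_union_of_disjoint disjoint_profiles_diagProfiles,
    card_union_of_disjoint (disjoint_offDiagProfiles_subdiagProfiles d), card_offDiagProfiles,
    card_subdiagProfiles, card_diagProfiles]
  have hsplit : #{k | 3 ≤ Fintype.card (α k)} + #{k | Fintype.card (α k) = 2} = d := by
    have hcard : #{k | Fintype.card (α k) = 2} = #{k | ¬3 ≤ Fintype.card (α k)} := by
      refine congrArg card (filter_congr fun k _ => ?_)
      have := Fintype.one_lt_card (α := α k)
      omega
    rw [hcard, card_filter_add_card_filter_not, card_univ, Fintype.card_fin]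
  have hsq : (d + 1) ^ 2 = d * (d + 1) + (d + 1) := by ring
  rw [hsq, mul_comm (d + 1) d, Nat.add_mul, one_mul]
  omega

end Profile

section Terwilliger

variable {d : ℕ} {n : Fin d → ℕ}

theorem wRel_iff_diffLevel {i : ℕ} (hi : i ≤ d) (x y : ∀ k : Fin d, Fin (n k)) :
    wRel d n i x y ↔ diffLevel x y = i := by
  unfold wRel
  split_ifs with h
  · have hk : i = ((⟨i - 1, by omega⟩ : Fin d) : ℕ) + 1 := (Nat.sub_add_cancel h.1).symm
    conv_rhs => rw [hk, diffLevel_eq_succ_iff]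
    simp only [Fin.lt_def]
  · rw [show i = 0 by omega, diffLevel_eq_zero_iff]

variable (hn : ∀ k, 2 ≤ n k)

theorem wA_mem_coloredMatrices {j : ℕ} (hj : j ≤ d) :
    wA d n j ∈ coloredMatrices ℂ (diffProfile (wBase d n hn)) :=
  mem_coloredMatrices_iff.2 ⟨fun p => if p.2.1 = j then 1 else 0, fun y z => by
    simp only [wA, Matrix.of_apply, wRel_iff_diffLevel hj, diffProfile]
    exact if_congr Iff.rfl rfl rfl⟩

theorem wE_mem_coloredMatrices {i : ℕ} (hi : i ≤ d) :
    wE d n hn i ∈ coloredMatrices ℂ (diffProfile (wBase d n hn)) :=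
  mem_coloredMatrices_iff.2 ⟨fun p => if p.2.1 = 0 ∧ p.1 = i then 1 else 0, fun y z => by
    simp [wE, wRel_iff_diffLevel hi, diffProfile, diffLevel_eq_zero_iff]⟩

theorem wE_eq_diagonal {i : ℕ} (hi : i ≤ d) :
    wE d n hn i = Matrix.diagonal fun y => if diffLevel (wBase d n hn) y = i then 1 else 0 := by
  ext y z
  simp only [wE, Matrix.of_apply, Matrix.diagonal_apply, wRel_iff_diffLevel hi]
  split_ifs <;> simp_all

theorem wE_mul_wA_mul_wE {i j h : ℕ} (hi : i ≤ d) (hj : j ≤ d) (hh : h ≤ d) :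
    wE d n hn i * wA d n j * wE d n hn h =
      colorMatrix (diffProfile (wBase d n hn)) (i, j, h) := by
  ext y z
  rw [wE_eq_diagonal hn hi, wE_eq_diagonal hn hh, Matrix.mul_diagonal, Matrix.diagonal_mul]
  simp only [wA, colorMatrix, Matrix.of_apply, wRel_iff_diffLevel hj, diffProfile, Prod.mk.injEq]
  split_ifs <;> simp_all

theorem toSubmodule_wT :
    Subalgebra.toSubmodule (wT d n hn) = coloredMatrices ℂ (diffProfile (wBase d n hn)) := by
  refine le_antisymm ?_ ?_
  · refine Subalgebra.toSubmodule.monotone (show wT d n hn ≤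
      (isCoherent_diffProfile (wBase d n hn)).subalgebra ℂ from Algebra.adjoin_le ?_)
    rintro _ (⟨i, hi, rfl⟩ | ⟨i, hi, rfl⟩)
    exacts [wA_mem_coloredMatrices hn hi, wE_mem_coloredMatrices hn hi]
  · rw [← span_colorMatrix, Submodule.span_le]
    rintro _ ⟨⟨_, hp⟩, rfl⟩
    obtain ⟨y, -, z, -, rfl⟩ := mem_image₂.1 hp
    show colorMatrix _ (diffProfile _ y z) ∈ wT d n hn
    rw [diffProfile,
      ← wE_mul_wA_mul_wE hn (diffLevel_le _ _) (diffLevel_le _ _) (diffLevel_le _ _)]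
    exact mul_mem (mul_mem (Algebra.subset_adjoin (Or.inr ⟨_, diffLevel_le _ _, rfl⟩))
      (Algebra.subset_adjoin (Or.inl ⟨_, diffLevel_le _ _, rfl⟩)))
      (Algebra.subset_adjoin (Or.inr ⟨_, diffLevel_le _ _, rfl⟩))

end Terwilliger

theorem dim_Terwilliger_wreath_general (d : ℕ)
    (n : Fin d → ℕ) (hn : ∀ k, 2 ≤ n k) :
    Module.finrank ℂ ↥(wT d n hn) =
      (d + 1) ^ 2 + d * (d + 1) / 2 -
        (Finset.univ.filter fun k : Fin d => n k = 2).card := by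
  have : ∀ k, Nontrivial (Fin (n k)) := fun k => Fin.nontrivial_iff_two_le.2 (hn k)
  calc Module.finrank ℂ (wT d n hn)
      = Module.finrank ℂ (Subalgebra.toSubmodule (wT d n hn)) := rfl
    _ = #(image₂ (diffProfile (wBase d n hn)) univ univ) := by
      rw [toSubmodule_wT, finrank_coloredMatrices]
    _ = _ := by simpa only [Fintype.card_fin] using card_image₂_diffProfile (wBase d n hn)

/-- The Terwilliger algebra `T` of `K_{n_1} ≀ ⋯ ≀ K_{n_d}` has
`ℂ`-dimension `(d+1)^2 + d(d+1)/2 - b`, where `b` is the number of factors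
`K_{n_k}` with `n_k = 2`. -/
theorem dim_Terwilliger_wreath (d : ℕ) (hd : 1 ≤ d)
    (n : Fin d → ℕ) (hn : ∀ k, 2 ≤ n k) :
    Module.finrank ℂ ↥(wT d n hn) =
      (d + 1) ^ 2 + d * (d + 1) / 2 -
        (Finset.univ.filter fun k : Fin d => n k = 2).card :=
  dim_Terwilliger_wreath_general d n hn
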